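/- Let R > 0, 0 < r₀ < R, C = (r₀, 0) ∈ ℝ². Let E ∈ ℝ² with ‖E‖ + R_B ≤ R for some R_B > 0, let x := ‖E − C‖ > R_B, and suppose E − C = x·(cos ψ_E, sin ψ_E) for some ψ_E ∈ (0, π). Set χ = 2·arcsin(R_B/x), ψ₁ = ψ_E − χ/2 and ψ₂ = ψ_E + χ/2, and assume 0 < ψ₁ and ψ₂ < π. Then the set {ζ ∈ [0, 2π) : the closed segment from C to (R cos ζ, R sin ζ) intersects the closed ball of radius R_B centered at E} has one-dimensional Lebesgue measure χ + arcsin(r₀ sin ψ₁ / R) − arcsin(r₀ sin ψ₂ / R); equivalently, the corresponding boundary arc has length L₁ = R·(χ + arcsin(r₀ sin ψ₁ / R) − arcsin(r₀ sin ψ₂ / R)). -/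

import Mathlib

open MeasureTheory Real

/-- The point of the Euclidean plane with Cartesian coordinates `(a, b)`. -/
noncomputable def pt (a b : ℝ) : EuclideanSpace ℝ (Fin 2) :=
  (WithLp.equiv 2 (Fin 2 → ℝ)).symm ![a, b]

/-!
Parametrise the boundary points by the direction `θ` of the ray from the user `C = (r₀, 0)` that
reaches them: by the law of sines that ray leaves the circle at polar angle
`θ - arcsin (r₀ sin θ / R)`, a strictly increasing function of `θ`. Since the blockage lies inside
the disk, the line of sight to a boundary point is blocked iff the whole ray is, i.e. iff `θ` is
within `arcsin (R_B / x) = χ / 2` of `ψ_E`. So the shadow is the image of `[ψ₁, ψ₂]`, an interval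
of length `(ψ₂ - arcsin (r₀ sin ψ₂ / R)) - (ψ₁ - arcsin (r₀ sin ψ₁ / R))`.
-/

open Metric RealInnerProductSpace

lemma le_one_of_norm_add_smul_le {W : Type*} [NormedAddCommGroup W] [NormedSpace ℝ W] {c v : W}
    {R t : ℝ} (hc : ‖c‖ < R) (hv : ‖c + v‖ = R) (ht : ‖c + t • v‖ ≤ R) : t ≤ 1 := by
  by_contra! h1
  have hs : 0 < t⁻¹ := by positivity
  have hs1 : t⁻¹ < 1 := inv_lt_one_of_one_lt₀ h1
  have hcomb : c + v = (1 - t⁻¹) • c + t⁻¹ • (c + t • v) := by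
    rw [smul_add, smul_smul, inv_mul_cancel₀ (by positivity), one_smul, sub_smul, one_smul]
    abel
  have : ‖c + v‖ < R := calc
    ‖c + v‖ ≤ (1 - t⁻¹) * ‖c‖ + t⁻¹ * ‖c + t • v‖ := by
      rw [hcomb]
      refine (norm_add_le _ _).trans_eq ?_
      rw [norm_smul, norm_smul, Real.norm_of_nonneg (by linarith), Real.norm_of_nonneg hs.le]
    _ < (1 - t⁻¹) * R + t⁻¹ * R :=
      add_lt_add_of_lt_of_le (mul_lt_mul_of_pos_left hc (by linarith))
        (mul_le_mul_of_nonneg_left ht hs.le)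
    _ = R := by ring
  exact this.ne hv

section InnerProductSpace

variable {V : Type*} [NormedAddCommGroup V] [InnerProductSpace ℝ V]

lemma norm_smul_sub_sq (t : ℝ) (v w : V) :
    ‖t • v - w‖ ^ 2 = t ^ 2 * ‖v‖ ^ 2 - 2 * t * ⟪v, w⟫ + ‖w‖ ^ 2 := by
  rw [norm_sub_sq_real, real_inner_smul_left, norm_smul, mul_pow, Real.norm_eq_abs, sq_abs]
  ring

/-- The ray `t ↦ t • v` meets the closed ball of radius `r` about `w` iff the angle between `v`
and `w` is at most `arcsin (r / ‖w‖)`. -/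
theorem exists_nonneg_norm_smul_sub_le_iff {v w : V} {r : ℝ} (hv : v ≠ 0) (hr : 0 ≤ r)
    (hrw : r < ‖w‖) :
    (∃ t : ℝ, 0 ≤ t ∧ ‖t • v - w‖ ≤ r) ↔ √(‖w‖ ^ 2 - r ^ 2) * ‖v‖ ≤ ⟪v, w⟫ := by
  have hv₀ : 0 < ‖v‖ := norm_pos_iff.2 hv
  have hs : √(‖w‖ ^ 2 - r ^ 2) ^ 2 = ‖w‖ ^ 2 - r ^ 2 := Real.sq_sqrt (by nlinarith)
  constructor
  · rintro ⟨t, ht, hdist⟩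
    have hquad : t ^ 2 * ‖v‖ ^ 2 - 2 * t * ⟪v, w⟫ + ‖w‖ ^ 2 ≤ r ^ 2 := by
      rw [← norm_smul_sub_sq]; exact pow_le_pow_left₀ (norm_nonneg _) hdist 2
    have ht : 0 < t := by
      refine ht.lt_of_ne' fun h0 => ?_
      subst h0; nlinarith
    -- AM-GM: `2 t ‖v‖ s ≤ t² ‖v‖² + s²` with `s = √(‖w‖² - r²)`
    have : t * (√(‖w‖ ^ 2 - r ^ 2) * ‖v‖) ≤ t * ⟪v, w⟫ := by
      nlinarith [sq_nonneg (t * ‖v‖ - √(‖w‖ ^ 2 - r ^ 2))]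
    exact le_of_mul_le_mul_left this ht
  · intro h
    refine ⟨⟪v, w⟫ / ‖v‖ ^ 2, div_nonneg ((by positivity : (0:ℝ) ≤ _).trans h) (by positivity), ?_⟩
    refine (pow_le_pow_iff_left₀ (norm_nonneg _) hr two_ne_zero).1 ?_
    have hsq : (√(‖w‖ ^ 2 - r ^ 2) * ‖v‖) ^ 2 ≤ ⟪v, w⟫ ^ 2 :=
      pow_le_pow_left₀ (by positivity) h 2
    rw [mul_pow, hs] at hsq
    rw [norm_smul_sub_sq, div_pow]
    field_simp
    nlinarith

/-- Beyond `p` the ray from `c` leaves the ball of radius `R`, which contains the obstacle, so the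
segment meets the obstacle iff the ray does. -/
theorem segment_inter_closedBall_nonempty_iff {c p e : V} {R r : ℝ} (hc : ‖c‖ < R)
    (hp : ‖p‖ = R) (he : ‖e‖ + r ≤ R) (hr : 0 ≤ r) (hre : r < ‖e - c‖) :
    (segment ℝ c p ∩ closedBall e r).Nonempty ↔
      √(‖e - c‖ ^ 2 - r ^ 2) * ‖p - c‖ ≤ ⟪p - c, e - c⟫ := by
  have hpc : p - c ≠ 0 := sub_ne_zero.2 fun h => hc.ne (h ▸ hp)
  have hshift (t : ℝ) : c + t • (p - c) - e = t • (p - c) - (e - c) := by abel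
  rw [← exists_nonneg_norm_smul_sub_le_iff hpc hr hre, segment_eq_image']
  constructor
  · rintro ⟨_, ⟨t, ⟨ht0, -⟩, rfl⟩, hball⟩
    rw [mem_closedBall, dist_eq_norm, hshift] at hball
    exact ⟨t, ht0, hball⟩
  · rintro ⟨t, ht0, hball⟩
    have ht1 : t ≤ 1 := by
      refine le_one_of_norm_add_smul_le hc (by rwa [add_sub_cancel]) ?_
      calc ‖c + t • (p - c)‖ = ‖(c + t • (p - c) - e) + e‖ := by rw [sub_add_cancel]
        _ ≤ ‖c + t • (p - c) - e‖ + ‖e‖ := norm_add_le _ _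
        _ ≤ R := by rw [hshift]; linarith
    exact ⟨_, ⟨t, ⟨ht0, ht1⟩, rfl⟩, by rwa [mem_closedBall, dist_eq_norm, hshift]⟩

end InnerProductSpace

lemma pt_add (a b c d : ℝ) : pt a b + pt c d = pt (a + c) (b + d) := by
  ext i; fin_cases i <;> simp [pt]

lemma smul_pt (r a b : ℝ) : r • pt a b = pt (r * a) (r * b) := by
  ext i; fin_cases i <;> simp [pt]

lemma inner_pt (a b c d : ℝ) : ⟪pt a b, pt c d⟫ = a * c + b * d := by
  simp [pt, PiLp.inner_apply, Fin.sum_univ_two]; ring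

lemma norm_pt (a b : ℝ) : ‖pt a b‖ = √(a ^ 2 + b ^ 2) := by
  rw [← Real.sqrt_sq (norm_nonneg _), ← real_inner_self_eq_norm_sq, inner_pt, sq, sq]

lemma norm_pt_cos_sin (θ : ℝ) : ‖pt (cos θ) (sin θ)‖ = 1 := by
  rw [norm_pt, cos_sq_add_sin_sq, Real.sqrt_one]

lemma inner_pt_cos_sin (θ ψ : ℝ) :
    ⟪pt (cos θ) (sin θ), pt (cos ψ) (sin ψ)⟫ = cos (θ - ψ) := by
  rw [inner_pt, cos_sub]

/-- The polar angle of the point where the ray from `(r₀, 0)` with direction angle `θ` leaves the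
circle of radius `R` (law of sines in the triangle formed by the origin, `(r₀, 0)` and that
point). -/
noncomputable def exitAngle (r₀ R θ : ℝ) : ℝ := θ - arcsin (r₀ * sin θ / R)

noncomputable def exitDist (r₀ R θ : ℝ) : ℝ := R * cos (arcsin (r₀ * sin θ / R)) - r₀ * cos θ

section Exit

variable {r₀ R : ℝ}

lemma abs_mul_sin_div_lt_one (h : |r₀| < R) (θ : ℝ) : |r₀ * sin θ / R| < 1 := by
  have hR : 0 < R := (abs_nonneg r₀).trans_lt h
  rw [abs_div, abs_of_pos hR, div_lt_one hR, abs_mul]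
  exact (mul_le_of_le_one_right (abs_nonneg r₀) (abs_sin_le_one θ)).trans_lt h

lemma sq_mul_cos_arcsin (h : |r₀| < R) (θ : ℝ) :
    (R * cos (arcsin (r₀ * sin θ / R))) ^ 2 = R ^ 2 - (r₀ * sin θ) ^ 2 := by
  have hR : 0 < R := (abs_nonneg r₀).trans_lt h
  have hu := abs_mul_sin_div_lt_one h θ
  rw [mul_pow, cos_arcsin, Real.sq_sqrt (sub_nonneg.2 ((sq_lt_one_iff_abs_lt_one _).2 hu).le)]
  field_simp

lemma exitDist_pos (h : |r₀| < R) (θ : ℝ) : 0 < exitDist r₀ R θ := by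
  have hR : 0 < R := (abs_nonneg r₀).trans_lt h
  have hsq : (r₀ * cos θ) ^ 2 < (R * cos (arcsin (r₀ * sin θ / R))) ^ 2 := by
    rw [sq_mul_cos_arcsin h]
    nlinarith [sin_sq_add_cos_sq θ, sq_abs r₀, abs_nonneg r₀]
  have := abs_lt_of_sq_lt_sq hsq (mul_nonneg hR.le (cos_arcsin_nonneg _))
  rw [exitDist, sub_pos]
  exact (le_abs_self _).trans_lt this

lemma pt_exitAngle (h : |r₀| < R) (θ : ℝ) :
    pt (R * cos (exitAngle r₀ R θ)) (R * sin (exitAngle r₀ R θ)) =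
      pt r₀ 0 + exitDist r₀ R θ • pt (cos θ) (sin θ) := by
  have hR : 0 < R := (abs_nonneg r₀).trans_lt h
  have hu := abs_lt.1 (abs_mul_sin_div_lt_one h θ)
  rw [smul_pt, pt_add, exitAngle, exitDist, cos_sub, sin_sub, sin_arcsin hu.1.le hu.2.le]
  congr 1
  · field_simp
    linear_combination r₀ * sin_sq_add_cos_sq θ
  · field_simp
    ring

lemma strictMono_exitAngle (h : |r₀| < R) : StrictMono (exitAngle r₀ R) := by
  have hR : 0 < R := (abs_nonneg r₀).trans_lt h
  refine strictMono_of_hasDerivAt_pos (f' := fun θ =>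
    1 - 1 / √(1 - (r₀ * sin θ / R) ^ 2) * (r₀ * cos θ / R)) (fun θ => ?_) (fun θ => ?_)
  · have hu := abs_lt.1 (abs_mul_sin_div_lt_one h θ)
    have hinner : HasDerivAt (fun θ => r₀ * sin θ / R) (r₀ * cos θ / R) θ :=
      ((hasDerivAt_sin θ).const_mul r₀).div_const R
    exact (hasDerivAt_id θ).sub ((hasDerivAt_arcsin hu.1.ne' hu.2.ne).comp θ hinner :)
  · have hc : 0 < √(1 - (r₀ * sin θ / R) ^ 2) :=
      Real.sqrt_pos.2 (sub_pos.2 ((sq_lt_one_iff_abs_lt_one _).2 (abs_mul_sin_div_lt_one h θ)))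
    have hd := exitDist_pos h θ
    rw [exitDist, cos_arcsin] at hd
    rw [sub_pos, one_div, ← div_eq_inv_mul, div_lt_one hc, div_lt_iff₀ hR]
    linarith

lemma continuous_exitAngle : Continuous (exitAngle r₀ R) :=
  continuous_id.sub (continuous_arcsin.comp (by fun_prop))

lemma exitAngle_of_sin_eq_zero {θ : ℝ} (h : sin θ = 0) : exitAngle r₀ R θ = θ := by
  simp [exitAngle, h]

lemma Icc_exitAngle_subset_Ico (h : |r₀| < R) {a b : ℝ} (ha : 0 < a) (hb : b < π) :
    Set.Icc (exitAngle r₀ R a) (exitAngle r₀ R b) ⊆ Set.Ico 0 (2 * π) := by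
  have h0 := strictMono_exitAngle h ha
  have hπ := strictMono_exitAngle h hb
  rw [exitAngle_of_sin_eq_zero sin_zero] at h0
  rw [exitAngle_of_sin_eq_zero sin_pi] at hπ
  exact fun ζ hζ => ⟨h0.le.trans hζ.1, by linarith [hζ.2, pi_pos]⟩

end Exit

lemma exists_exitAngle_eq {r₀ R ζ : ℝ} (hζ : ζ ∈ Set.Ico 0 (2 * π)) :
    ∃ θ ∈ Set.Ico 0 (2 * π), exitAngle r₀ R θ = ζ := by
  have h0 : exitAngle r₀ R 0 = 0 := exitAngle_of_sin_eq_zero sin_zero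
  have h2π : exitAngle r₀ R (2 * π) = 2 * π := exitAngle_of_sin_eq_zero sin_two_pi
  obtain ⟨θ, hθ, hθζ⟩ := intermediate_value_Icc (by positivity : (0 : ℝ) ≤ 2 * π)
    continuous_exitAngle.continuousOn (by rw [h0, h2π]; exact Set.Ico_subset_Icc_self hζ)
  refine ⟨θ, ⟨hθ.1, hθ.2.lt_of_ne ?_⟩, hθζ⟩
  rintro rfl
  exact hζ.2.ne (hθζ ▸ h2π)

lemma cos_le_cos_sub_iff {θ ψ δ : ℝ} (hθ : θ ∈ Set.Ico 0 (2 * π)) (hδ : 0 ≤ δ)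
    (hψδ : 0 < ψ - δ) (hψδπ : ψ + δ < π) :
    cos δ ≤ cos (θ - ψ) ↔ θ ∈ Set.Icc (ψ - δ) (ψ + δ) := by
  rcases le_or_gt (θ - ψ) π with hle | hgt
  · have hd : |θ - ψ| ≤ π := abs_le.2 ⟨by linarith [hθ.1], hle⟩
    rw [← cos_abs (θ - ψ), strictAntiOn_cos.le_iff_ge ⟨hδ, by linarith⟩ ⟨abs_nonneg _, hd⟩,
      abs_le, Set.mem_Icc]
    constructor <;> rintro ⟨h₁, h₂⟩ <;> constructor <;> linarith
  · -- here `θ - ψ` is `2π` minus an angle in `(δ, π)`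
    have hcos : cos (θ - ψ) = cos (2 * π - (θ - ψ)) := by rw [cos_two_pi_sub]
    refine iff_of_false (fun h => ?_) (fun h => by linarith [h.2])
    rw [hcos, strictAntiOn_cos.le_iff_ge ⟨hδ, by linarith⟩ ⟨by linarith [hθ.2], by linarith⟩] at h
    linarith [hθ.2]

lemma mul_cos_arcsin_div {r x : ℝ} (hx : 0 < x) : x * cos (arcsin (r / x)) = √(x ^ 2 - r ^ 2) := by
  have : x ^ 2 - r ^ 2 = x ^ 2 * (1 - (r / x) ^ 2) := by field_simp
  rw [this, Real.sqrt_mul (sq_nonneg x), Real.sqrt_sq hx.le, cos_arcsin]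

theorem segment_exitAngle_inter_closedBall_nonempty_iff {r₀ R r x ψ θ : ℝ}
    {e : EuclideanSpace ℝ (Fin 2)} (h : |r₀| < R) (he : ‖e‖ + r ≤ R) (hr : 0 ≤ r) (hrx : r < x)
    (hec : e - pt r₀ 0 = x • pt (cos ψ) (sin ψ)) :
    (segment ℝ (pt r₀ 0) (pt (R * cos (exitAngle r₀ R θ)) (R * sin (exitAngle r₀ R θ))) ∩
        closedBall e r).Nonempty ↔ cos (arcsin (r / x)) ≤ cos (θ - ψ) := by
  have hx : 0 < x := hr.trans_lt hrx
  have hR : 0 < R := (abs_nonneg r₀).trans_lt h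
  have hc : ‖pt r₀ 0‖ < R := by rwa [norm_pt, zero_pow two_ne_zero, add_zero, Real.sqrt_sq_eq_abs]
  have hp : ‖pt (R * cos (exitAngle r₀ R θ)) (R * sin (exitAngle r₀ R θ))‖ = R := by
    rw [← smul_pt, norm_smul, norm_pt_cos_sin, mul_one, Real.norm_of_nonneg hR.le]
  have hnec : ‖e - pt r₀ 0‖ = x := by
    rw [hec, norm_smul, norm_pt_cos_sin, mul_one, Real.norm_of_nonneg hx.le]
  have hd := exitDist_pos h θ
  rw [segment_inter_closedBall_nonempty_iff hc hp he hr (hnec ▸ hrx), pt_exitAngle h,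
    add_sub_cancel_left, hnec, hec, ← mul_cos_arcsin_div hx, norm_smul, norm_pt_cos_sin,
    real_inner_smul_left, real_inner_smul_right, inner_pt_cos_sin, Real.norm_of_nonneg hd.le]
  constructor
  · intro hle
    refine le_of_mul_le_mul_left ?_ (mul_pos hx hd)
    linarith
  · intro hle
    nlinarith [mul_pos hx hd]

theorem shadow_arc_from_user_general
    (R r₀ R_B : ℝ) (hr₀ : 0 < r₀) (hr₀R : r₀ < R) (hRB : 0 < R_B)
    (C E : EuclideanSpace ℝ (Fin 2)) (hC : C = pt r₀ 0)
    (hE : ‖E‖ + R_B ≤ R)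
    (x : ℝ) (hxRB : R_B < x)
    (ψ_E : ℝ)
    (hEC : E - C = x • pt (Real.cos ψ_E) (Real.sin ψ_E))
    (χ ψ₁ ψ₂ : ℝ) (hχ : χ = 2 * Real.arcsin (R_B / x))
    (hψ₁ : ψ₁ = ψ_E - χ / 2) (hψ₂ : ψ₂ = ψ_E + χ / 2)
    (hψ₁pos : 0 < ψ₁) (hψ₂lt : ψ₂ < π) :
    volume {ζ ∈ Set.Ico (0 : ℝ) (2 * π) |
        (segment ℝ C (pt (R * Real.cos ζ) (R * Real.sin ζ)) ∩
          Metric.closedBall E R_B).Nonempty} =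
      ENNReal.ofReal (χ + Real.arcsin (r₀ * Real.sin ψ₁ / R)
        - Real.arcsin (r₀ * Real.sin ψ₂ / R)) := by
  subst hC
  have hr₀R' : |r₀| < R := by rwa [abs_of_pos hr₀]
  have hF := strictMono_exitAngle hr₀R'
  have hδ : χ / 2 = arcsin (R_B / x) := by rw [hχ]; ring
  have hδ0 : 0 ≤ χ / 2 := hδ ▸ arcsin_nonneg.2 (div_nonneg hRB.le (hRB.trans hxRB).le)
  have hshadow : ∀ ζ ∈ Set.Ico 0 (2 * π),
      (segment ℝ (pt r₀ 0) (pt (R * cos ζ) (R * sin ζ)) ∩ closedBall E R_B).Nonempty ↔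
        ζ ∈ Set.Icc (exitAngle r₀ R ψ₁) (exitAngle r₀ R ψ₂) := by
    intro ζ hζ
    obtain ⟨θ, hθ, rfl⟩ := exists_exitAngle_eq (r₀ := r₀) (R := R) hζ
    rw [segment_exitAngle_inter_closedBall_nonempty_iff hr₀R' hE hRB.le hxRB hEC, ← hδ,
      cos_le_cos_sub_iff hθ hδ0 (hψ₁ ▸ hψ₁pos) (hψ₂ ▸ hψ₂lt), ← hψ₁, ← hψ₂, Set.mem_Icc,
      Set.mem_Icc, hF.le_iff_le, hF.le_iff_le]
  have hIcc := Icc_exitAngle_subset_Ico hr₀R' hψ₁pos hψ₂lt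
  have hset : {ζ ∈ Set.Ico (0 : ℝ) (2 * π) |
      (segment ℝ (pt r₀ 0) (pt (R * cos ζ) (R * sin ζ)) ∩ closedBall E R_B).Nonempty} =
      Set.Icc (exitAngle r₀ R ψ₁) (exitAngle r₀ R ψ₂) :=
    Set.ext fun ζ => ⟨fun h => (hshadow ζ h.1).1 h.2, fun h => ⟨hIcc h, (hshadow ζ (hIcc h)).2 h⟩⟩
  rw [hset, volume_Icc, exitAngle, exitAngle, hψ₁, hψ₂]
  congr 1
  ring

/-- Shadow arc of a circular blockage seen from the user (Lemma 1, non-degenerate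
case): the set of polar angles `ζ ∈ [0, 2π)` of boundary points of the disk of
radius `R` whose line-of-sight segment to the user `C = (r₀, 0)` meets the closed
blockage ball of radius `R_B` centered at `E` has one-dimensional Lebesgue measure
`χ + arcsin(r₀ sin ψ₁ / R) − arcsin(r₀ sin ψ₂ / R)`; the corresponding boundary
arc has length `R` times this quantity. -/
theorem shadow_arc_from_user
    (R r₀ R_B : ℝ) (hR : 0 < R) (hr₀ : 0 < r₀) (hr₀R : r₀ < R) (hRB : 0 < R_B)
    (C E : EuclideanSpace ℝ (Fin 2)) (hC : C = pt r₀ 0)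
    (hE : ‖E‖ + R_B ≤ R)
    (x : ℝ) (hx : x = ‖E - C‖) (hxRB : R_B < x)
    (ψ_E : ℝ) (hψE : ψ_E ∈ Set.Ioo 0 π)
    (hEC : E - C = x • pt (Real.cos ψ_E) (Real.sin ψ_E))
    (χ ψ₁ ψ₂ : ℝ) (hχ : χ = 2 * Real.arcsin (R_B / x))
    (hψ₁ : ψ₁ = ψ_E - χ / 2) (hψ₂ : ψ₂ = ψ_E + χ / 2)
    (hψ₁pos : 0 < ψ₁) (hψ₂lt : ψ₂ < π) :
    volume {ζ ∈ Set.Ico (0 : ℝ) (2 * π) |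
        (segment ℝ C (pt (R * Real.cos ζ) (R * Real.sin ζ)) ∩
          Metric.closedBall E R_B).Nonempty} =
      ENNReal.ofReal (χ + Real.arcsin (r₀ * Real.sin ψ₁ / R)
        - Real.arcsin (r₀ * Real.sin ψ₂ / R)) :=
  shadow_arc_from_user_general R r₀ R_B hr₀ hr₀R hRB C E hC hE x hxRB ψ_E hEC χ ψ₁ ψ₂ hχ hψ₁ hψ₂
    hψ₁pos hψ₂lt
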